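/- Suppose the stock prices are nonnegative and there is r̄ ∈ ℝ_+ with max_{t=1,…,T} r_t ≤ r̄ a.s. Let x ∈ ℝ and define, for N ∈ 𝒩, L_t(N) := ((−x) ∨ 0 + Σ_{s=0}^{t−1} ⟨q_s(Σ_{i=0}^s N_{i,s}), S_s⟩)·(1+r̄)^T. Then: (i) for every {0,…,T}-valued stopping time τ and the stopped strategy N^{(τ)} defined by N^{(τ)}_{i,t} := N_{i,t}·1_{{τ > t}}, one has L_t(N^{(τ)}) = L_{t∧τ}(N) for t = 0,…,T; and (ii) for every N ∈ 𝒩 that realizes losses (i.e. {S^j_i > S^j_t} ⊆ {N_{i,t,j} = 0} a.s. for all i < t ≤ T, j = 1,…,d), one has V^α(x,N) ≥ −L_T(N) almost surely. -/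

import Mathlib

open MeasureTheory Filter Finset

noncomputable section
open scoped Classical

/-- Euclidean inner product on `Fin d → ℝ`. -/
def dotp {d : ℕ} (a b : Fin d → ℝ) : ℝ := ∑ j, a j * b j

/-- Euclidean norm on `Fin d → ℝ`. -/
def eucNorm {d : ℕ} (a : Fin d → ℝ) : ℝ := Real.sqrt (∑ j, a j ^ 2)

/-- Accumulated realized gains and losses `G_t`, given the bank account history `eta`:
`G_t = ∑_{u=1}^t ( η_{u-1} r_u + ∑_{i=0}^{u-1} ⟨N_{i,u-1} - N_{i,u}, S_u - S_i⟩ )`. -/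
def Gaux {d : ℕ} (S : ℕ → Fin d → ℝ) (r : ℕ → ℝ) (N : ℕ → ℕ → Fin d → ℝ)
    (eta : ℕ → ℝ) (t : ℕ) : ℝ :=
  ∑ u ∈ Finset.Icc 1 t,
    (eta (u - 1) * r u +
      ∑ i ∈ Finset.range u, dotp (fun j => N i (u - 1) j - N i u j) (fun j => S u j - S i j))

/-- Limited-use-of-losses tax payments `Π_t = α · max_{0 ≤ u ≤ t} G_u`. -/
def Piaux {d : ℕ} (α : ℝ) (S : ℕ → Fin d → ℝ) (r : ℕ → ℝ) (N : ℕ → ℕ → Fin d → ℝ)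
    (eta : ℕ → ℝ) (t : ℕ) : ℝ :=
  α * (Finset.range (t + 1)).sup' Finset.nonempty_range_add_one (fun u => Gaux S r N eta u)

/-- `etaHist α x S r N t` is the bank-account history after trading and taxes, up to time `t`:
for `s ≤ t` it gives `η_s`, and for `s > t` it gives `η_t`.  It is defined by the
self-financing recursion `η_{-1} = x`,
`η_t - η_{t-1} = r_t η_{t-1} 1_{t ≥ 1} + ⟨∑_{i<t}(N_{i,t-1} - N_{i,t}) - N_{t,t}, S_t⟩
  - (Π_t - Π_{t-1}) 1_{t ≥ 1}`. -/
def etaHist {d : ℕ} (α x : ℝ) (S : ℕ → Fin d → ℝ) (r : ℕ → ℝ)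
    (N : ℕ → ℕ → Fin d → ℝ) : ℕ → ℕ → ℝ :=
  Nat.rec (motive := fun _ => ℕ → ℝ)
    (fun _ => x - dotp (fun j => N 0 0 j) (fun j => S 0 j))
    (fun t e => fun s =>
      if s ≤ t then e s
      else
        e t + r (t + 1) * e t
          + dotp
              (fun j => (∑ i ∈ Finset.range (t + 1), (N i t j - N i (t + 1) j))
                - N (t + 1) (t + 1) j)
              (fun j => S (t + 1) j)
          - (Piaux α S r N e (t + 1) - Piaux α S r N e t))

/-- A discrete-time market with horizon `T`, `d` risky assets, a filtration `F`,
adapted nonnegative-price processes are not required in general, and a nonnegative adapted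
interest-rate process `r`. -/
structure Market (Ω : Type*) [m0 : MeasurableSpace Ω] (T d : ℕ) where
  P : Measure Ω
  hProb : IsProbabilityMeasure P
  F : ℕ → MeasurableSpace Ω
  F_le : ∀ t, F t ≤ m0
  F_mono : Monotone F
  S : ℕ → Ω → Fin d → ℝ
  S_adapted : ∀ t, Measurable[F t] (S t)
  r : ℕ → Ω → ℝ
  r_nonneg : ∀ t ω, 0 ≤ r t ω
  r_adapted : ∀ t, Measurable[F t] (r t)

variable {Ω : Type*} [m0 : MeasurableSpace Ω] {T d : ℕ}

/-- A trading strategy: `N i t ω j` is the number of shares of asset `j` bought at time `i`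
and still held after trading at time `t`.  It is `F t`-adapted, nonnegative, nonincreasing
in `t` (for `i ≤ t < T`), forced to liquidate at `T`, and zero before the purchase date. -/
def Market.IsStrategy (M : Market Ω T d) (N : ℕ → ℕ → Ω → Fin d → ℝ) : Prop :=
  (∀ i t, Measurable[M.F t] (N i t)) ∧
  (∀ i t ω j, 0 ≤ N i t ω j) ∧
  (∀ i t, i ≤ t → t < T → ∀ ω j, N i (t + 1) ω j ≤ N i t ω j) ∧
  (∀ i ω j, N i T ω j = 0) ∧
  (∀ i t, t < i → ∀ ω j, N i t ω j = 0)

/-- After-tax terminal wealth `V^α(x,N) = η_T`. -/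
def Market.V (M : Market Ω T d) (α x : ℝ) (N : ℕ → ℕ → Ω → Fin d → ℝ) (ω : Ω) : ℝ :=
  etaHist α x (fun t => M.S t ω) (fun t => M.r t ω) (fun i t => N i t ω) T T

/-- The frictionless (tax-free) wealth process `V^0_t(x,N) = η_t + ⟨∑_{i≤t} N_{i,t}, S_t⟩`,
where `η` is the bank account for tax rate `0`. -/
def Market.V0proc (M : Market Ω T d) (x : ℝ) (N : ℕ → ℕ → Ω → Fin d → ℝ) (t : ℕ) (ω : Ω) : ℝ :=
  etaHist 0 x (fun u => M.S u ω) (fun u => M.r u ω) (fun i u => N i u ω) t t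
    + dotp (fun j => ∑ i ∈ Finset.range (t + 1), N i t ω j) (fun j => M.S t ω j)

/-- The no-arbitrage condition for tax rate `α`. -/
def Market.NA (M : Market Ω T d) (α : ℝ) : Prop :=
  ∀ N, M.IsStrategy N → (∀ᵐ ω ∂M.P, 0 ≤ M.V α 0 N ω) → ∀ᵐ ω ∂M.P, M.V α 0 N ω = 0

/-- The set `{V^α(x,N) : N ∈ 𝒩} - L^0(F_T; ℝ₊)` of attainable after-tax terminal wealths. -/
def Market.Vset (M : Market Ω T d) (α x : ℝ) : Set (Ω → ℝ) :=
  {f | ∃ N, M.IsStrategy N ∧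
    ∃ g : Ω → ℝ, Measurable[M.F T] g ∧ (∀ ω, 0 ≤ g ω) ∧ f = fun ω => M.V α x N ω - g ω}

/-- The frictionless wealth recursion
`V_t = (1+r_t) V_{t-1} + ⟨∑_{i<t} N_{i,t-1}, S_t - (1+r_t) S_{t-1}⟩`. -/
def wealth0 {d : ℕ} (S : ℕ → Fin d → ℝ) (r : ℕ → ℝ) (N : ℕ → ℕ → Fin d → ℝ) (x : ℝ) :
    ℕ → ℝ :=
  Nat.rec (motive := fun _ => ℝ) x (fun t W =>
    (1 + r (t + 1)) * W
      + dotp (fun j => ∑ i ∈ Finset.range (t + 1), N i t j)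
          (fun j => S (t + 1) j - (1 + r (t + 1)) * S t j))

/-- Frictionless terminal wealth `V^0(x,N)`. -/
def Market.V0 (M : Market Ω T d) (x : ℝ) (N : ℕ → ℕ → Ω → Fin d → ℝ) (ω : Ω) : ℝ :=
  wealth0 (fun t => M.S t ω) (fun t => M.r t ω) (fun i t => N i t ω) x T

/-- No-arbitrage for the frictionless model. -/
def Market.NA0 (M : Market Ω T d) : Prop :=
  ∀ N, M.IsStrategy N → (∀ᵐ ω ∂M.P, 0 ≤ M.V0 0 N ω) → ∀ᵐ ω ∂M.P, M.V0 0 N ω = 0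

/-- The cone `ℛ_t` of reversible one-period strategies. -/
def Market.RevCone (M : Market Ω T d) (t : ℕ) : Set (Ω → Fin d → ℝ) :=
  {β | Measurable[M.F t] β ∧ (∀ ω j, 0 ≤ β ω j) ∧
    ∀ᵐ ω ∂M.P, dotp (β ω) (fun j => M.S (t + 1) ω j - (1 + M.r (t + 1) ω) * M.S t ω j) = 0}

/-- `q` is the purely nonreversible part `q_t(β)` of `β`: it is `F_t`-measurable, nonnegative,
`β - q` is reversible, and `q` has minimal Euclidean norm among all such decompositions. -/
def Market.IsQ (M : Market Ω T d) (t : ℕ) (β q : Ω → Fin d → ℝ) : Prop :=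
  Measurable[M.F t] q ∧ (∀ ω j, 0 ≤ q ω j) ∧
  (fun ω j => β ω j - q ω j) ∈ M.RevCone t ∧
  ∀ q' : Ω → Fin d → ℝ, Measurable[M.F t] q' → (∀ ω j, 0 ≤ q' ω j) →
    (fun ω j => β ω j - q' ω j) ∈ M.RevCone t →
    ∀ᵐ ω ∂M.P, eucNorm (q ω) ≤ eucNorm (q' ω)

/-- `β` is purely nonreversible, i.e. `q_t(β) = β`. -/
def Market.PurelyNonRev (M : Market Ω T d) (t : ℕ) (β : Ω → Fin d → ℝ) : Prop :=
  M.IsQ t β β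

/-- A reaction function: `R ω a i t` may depend on `ω` only through `F_t` and on the action
history `a` only through the actions up to time `t`; it is nonnegative, nonincreasing in `t`,
vanishes at and after the horizon `T` and before the purchase date. -/
structure ReactionFun (M : Market Ω T d) where
  R : Ω → (ℕ → ℕ → Fin d → ℝ) → ℕ → ℕ → Fin d → ℝ
  nonneg : ∀ ω a i t j, 0 ≤ R ω a i t j
  adapted_actions : ∀ ω a a' i t, (∀ i' t', t' ≤ t → a i' t' = a' i' t') →
    R ω a i t = R ω a' i t
  meas : ∀ i t, Measurable[(M.F t).prod inferInstance]
    (fun p : Ω × (ℕ → ℕ → Fin d → ℝ) => R p.1 p.2 i t)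
  antitone : ∀ ω a i t, i ≤ t → t + 2 ≤ T → ∀ j, R ω a i (t + 1) j ≤ R ω a i t j
  upper : ∀ ω a i t, T ≤ t → ∀ j, R ω a i t j = 0
  lower : ∀ ω a i t, t < i → ∀ j, R ω a i t j = 0

/-- The strategy `R(N)` produced by a reaction function from a strategy `N`. -/
def ReactionFun.apply {M : Market Ω T d} (Rf : ReactionFun M)
    (N : ℕ → ℕ → Ω → Fin d → ℝ) : ℕ → ℕ → Ω → Fin d → ℝ :=
  fun i t ω => Rf.R ω (fun i' t' => N i' t' ω) i t

/-- `max_{i=0,…,T-1, j=1,…,d} N_{i,i,j}`. -/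
def stratMax {Ω : Type*} {d : ℕ} (T : ℕ) (N : ℕ → ℕ → Ω → Fin d → ℝ) (ω : Ω) : ℝ :=
  ⨆ i ∈ Finset.range T, ⨆ j : Fin d, N i i ω j

/-- A family of random variables is bounded in `L⁰` (bounded in probability). -/
def BoundedInL0 {Ω : Type*} [MeasurableSpace Ω] (P : Measure Ω) (𝒮 : Set (Ω → ℝ)) : Prop :=
  ∀ ε : ℝ, 0 < ε → ∃ C : ℝ, ∀ f ∈ 𝒮, P {ω | C < |f ω|} ≤ ENNReal.ofReal ε

/-- The "no unbounded non-substitutable investment with bounded risk" condition. -/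
def Market.NUIBR (M : Market Ω T d) (α : ℝ) : Prop :=
  ∀ x : ℝ, ∃ Rf : ReactionFun M,
    (∀ N, M.IsStrategy N → M.IsStrategy (Rf.apply N)) ∧
    (∀ N, M.IsStrategy N → ∀ᵐ ω ∂M.P, M.V α x N ω ≤ M.V α x (Rf.apply N) ω) ∧
    ∀ K : ℝ, 0 ≤ K →
      BoundedInL0 M.P (convexHull ℝ
        {f : Ω → ℝ | ∃ N, M.IsStrategy N ∧ (∀ᵐ ω ∂M.P, -K ≤ M.V α x N ω) ∧
          f = stratMax T (Rf.apply N)})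

/-- A set of random variables is closed with respect to convergence in probability
(as a subset of `L⁰`, i.e. up to almost-sure equality). -/
def ClosedInProbability {Ω : Type*} [MeasurableSpace Ω] (P : Measure Ω)
    (𝒮 : Set (Ω → ℝ)) : Prop :=
  ∀ (f : ℕ → Ω → ℝ) (g : Ω → ℝ), (∀ n, f n ∈ 𝒮) →
    TendstoInMeasure P f Filter.atTop g → ∃ g' ∈ 𝒮, g' =ᵐ[P] g


/-- Bank account process for an artificial linear tax rule `τ`:
taxes `Π^{(τ)}_t = α · G_{τ_t}` are paid according to the rule `τ` (with `τ 0 = 0`,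
so that `Π^{(τ)}_0 = 0`).  `etaTau α x S r N τ t s` gives `η^{(τ)}_s` for `s ≤ t`. -/
def etaTau {d : ℕ} (α x : ℝ) (S : ℕ → Fin d → ℝ) (r : ℕ → ℝ)
    (N : ℕ → ℕ → Fin d → ℝ) (τ : ℕ → ℕ) : ℕ → ℕ → ℝ :=
  Nat.rec (motive := fun _ => ℕ → ℝ)
    (fun _ => x - dotp (fun j => N 0 0 j) (fun j => S 0 j))
    (fun t e => fun s =>
      if s ≤ t then e s
      else
        e t + r (t + 1) * e t
          + dotp
              (fun j => (∑ i ∈ Finset.range (t + 1), (N i t j - N i (t + 1) j))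
                - N (t + 1) (t + 1) j)
              (fun j => S (t + 1) j)
          - (α * Gaux S r N e (τ (t + 1)) - α * Gaux S r N e (τ t)))

variable {Ω : Type*} [m0 : MeasurableSpace Ω] {T d : ℕ}

/-- An artificial linear tax rule: an adapted `{0,…,T}`-valued process `τ` with `τ_0 = 0`,
`τ` nondecreasing in `t`, `τ_t ≤ t`, and `τ_{τ_t} = τ_t` whenever `τ_t ≥ 1`. -/
def Market.IsTaxRule (M : Market Ω T d) (τ : ℕ → Ω → ℕ) : Prop :=
  (∀ ω, τ 0 ω = 0) ∧
  (∀ t, Measurable[M.F t] (τ t)) ∧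
  (∀ t ω, τ t ω ≤ t) ∧
  (∀ t ω, τ t ω ≤ T) ∧
  (∀ s t, s ≤ t → ∀ ω, τ s ω ≤ τ t ω) ∧
  (∀ t ω, 1 ≤ τ t ω → τ (τ t ω) ω = τ t ω)

/-- Terminal bank account `η^{(τ)}_T(N)` under the artificial tax rule `τ`. -/
def Market.etaTauT (M : Market Ω T d) (α x : ℝ) (N : ℕ → ℕ → Ω → Fin d → ℝ)
    (τ : ℕ → Ω → ℕ) (ω : Ω) : ℝ :=
  etaTau α x (fun t => M.S t ω) (fun t => M.r t ω) (fun i t => N i t ω) (fun t => τ t ω) T T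

/-- A strategy realizes losses: it does not keep shares that trade below their purchase
price. -/
def Market.RealizesLosses (M : Market Ω T d) (N : ℕ → ℕ → Ω → Fin d → ℝ) : Prop :=
  ∀ i t j, i < t → t ≤ T → ∀ᵐ ω ∂M.P, M.S t ω j < M.S i ω j → N i t ω j = 0

/-- The loss bound `L_t(N) = ((−x) ∨ 0 + ∑_{s<t} ⟨q_s(∑_{i≤s} N_{i,s}), S_s⟩)(1+r̄)^T`,
expressed through a given family `q s` of purely nonreversible parts. -/
def Lfun {Ω : Type*} {d : ℕ} (x rbar : ℝ) (T : ℕ) (S : ℕ → Ω → Fin d → ℝ)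
    (q : ℕ → Ω → Fin d → ℝ) (t : ℕ) (ω : Ω) : ℝ :=
  (max (-x) 0 + ∑ s ∈ Finset.range t, dotp (q s ω) (fun j => S s ω j)) * (1 + rbar) ^ T

/-- A stopping time of the filtration `F`. -/
def IsStoppingTimeFun {Ω : Type*} (F : ℕ → MeasurableSpace Ω) (τ : Ω → ℕ) : Prop :=
  ∀ t : ℕ, MeasurableSet[F t] {ω | τ ω ≤ t}

/-- The family of random variables over which the essential infimum defining `ε_t` is
taken. -/
def Market.epsFamily (M : Market Ω T d) (t : ℕ) : Set (Ω → ENNReal) :=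
  {g | ∃ (ε : Ω → ℝ) (A : Set Ω) (N : ℕ → ℕ → Ω → Fin d → ℝ),
    Measurable[M.F t] ε ∧ (∀ ω, ε ω ∈ Set.Icc (0:ℝ) 1) ∧
    MeasurableSet[M.F t] A ∧
    M.IsStrategy N ∧ (∀ i, i < t → ∀ ω j, N i i ω j = 0) ∧
    M.PurelyNonRev t (fun ω => N t t ω) ∧
    (∀ᵐ ω ∂M.P, eucNorm (N t t ω) = Set.indicator A (fun _ => (1:ℝ)) ω) ∧
    (∀ᵐ ω ∂M.P,
      (M.P[Set.indicator {ω' | M.V0 0 N ω' ≤ - ε ω'} (fun _ => (1:ℝ)) | M.F t]) ω ≤ ε ω) ∧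
    g = fun ω => if ω ∈ A then ENNReal.ofReal (ε ω) else (⊤ : ENNReal)}

/-- `e` is the essential infimum of the family `𝒮` of `[0,∞]`-valued random variables
(with respect to `P`, measurable with respect to `m'`). -/
def IsEssInfOfSet {Ω : Type*} [MeasurableSpace Ω] (m' : MeasurableSpace Ω) (P : Measure Ω)
    (𝒮 : Set (Ω → ENNReal)) (e : Ω → ENNReal) : Prop :=
  Measurable[m'] e ∧ (∀ g ∈ 𝒮, ∀ᵐ ω ∂P, e ω ≤ g ω) ∧
  ∀ e' : Ω → ENNReal, Measurable[m'] e' → (∀ g ∈ 𝒮, ∀ᵐ ω ∂P, e' ω ≤ g ω) →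
    ∀ᵐ ω ∂P, e' ω ≤ e ω

/-- The positive part of an extended-real number, as an element of `[0,∞]`. -/
def erealPos (y : EReal) : ENNReal := if y = ⊤ then ⊤ else ENNReal.ofReal y.toReal

/-- A utility function: `U = -∞` on the negative half-line, real-valued, nondecreasing and
concave on the positive half-line (with real restriction `u`), and continuous from the
right at `0`. -/
structure UtilityFun where
  U : ℝ → EReal
  u : ℝ → ℝ
  neg_bot : ∀ y : ℝ, y < 0 → U y = ⊥
  pos_real : ∀ y : ℝ, 0 < y → U y = (u y : EReal)
  mono : MonotoneOn u (Set.Ioi (0:ℝ))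
  concave : ConcaveOn ℝ (Set.Ioi (0:ℝ)) u
  zero_lim : Filter.Tendsto U (nhdsWithin 0 (Set.Ioi (0:ℝ))) (nhds (U 0))

/-- Expected utility `E[U(X)] = E[U⁺(X)] - E[U⁻(X)]`, with the convention that it equals
`-∞` whenever `E[U⁻(X)] = ∞`. -/
def expUtility {Ω : Type*} [MeasurableSpace Ω] (P : Measure Ω) (Uf : UtilityFun)
    (X : Ω → ℝ) : EReal :=
  if (∫⁻ ω, erealPos (-(Uf.U (X ω))) ∂P) = ⊤ then ⊥
  else ((∫⁻ ω, erealPos (Uf.U (X ω)) ∂P : ENNReal) : EReal)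
    - ((∫⁻ ω, erealPos (-(Uf.U (X ω))) ∂P : ENNReal) : EReal)

/-- The value function `u^α(x) = sup_{N ∈ 𝒜^α(x)} E[U(V^α(x,N))]` of the utility
maximization problem with taxes. -/
def Market.valueFn (M : Market Ω T d) (Uf : UtilityFun) (α x : ℝ) : EReal :=
  ⨆ N ∈ {N : ℕ → ℕ → Ω → Fin d → ℝ |
      M.IsStrategy N ∧ ∀ᵐ ω ∂M.P, 0 ≤ M.V α x N ω},
    expUtility M.P Uf (fun ω => M.V α x N ω)

/-- The value function `u^0(x)` of the frictionless utility maximization problem. -/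
def Market.valueFn0 (M : Market Ω T d) (Uf : UtilityFun) (x : ℝ) : EReal :=
  ⨆ N ∈ {N : ℕ → ℕ → Ω → Fin d → ℝ |
      M.IsStrategy N ∧ ∀ᵐ ω ∂M.P, 0 ≤ M.V0 x N ω},
    expUtility M.P Uf (fun ω => M.V0 x N ω)

/-- The set `{V^α(x,N) : N ∈ 𝒜^α(x)} - L^0(F_T; ℝ₊)`. -/
def Market.VsetNonneg (M : Market Ω T d) (α x : ℝ) : Set (Ω → ℝ) :=
  {f | ∃ N, M.IsStrategy N ∧ (∀ᵐ ω ∂M.P, 0 ≤ M.V α x N ω) ∧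
    ∃ g : Ω → ℝ, Measurable[M.F T] g ∧ (∀ ω, 0 ≤ g ω) ∧ f = fun ω => M.V α x N ω - g ω}

/-- The set `{V^0(x,N) : N ∈ 𝒩} - L^0(F_T; ℝ₊)` for the frictionless model. -/
def Market.V0set (M : Market Ω T d) (x : ℝ) : Set (Ω → ℝ) :=
  {f | ∃ N, M.IsStrategy N ∧
    ∃ g : Ω → ℝ, Measurable[M.F T] g ∧ (∀ ω, 0 ≤ g ω) ∧ f = fun ω => M.V0 x N ω - g ω}

/-- A measurable (set-valued) random set: preimages of open sets are measurable. -/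
def MeasRandomSet {Ω : Type*} (m : MeasurableSpace Ω) {d : ℕ}
    (K : Ω → Set (Fin d → ℝ)) : Prop :=
  ∀ O : Set (Fin d → ℝ), IsOpen O → MeasurableSet[m] {ω | (K ω ∩ O).Nonempty}

/-- The random set `A_t = {β ∈ 𝒫_t : 1 + r_{t+1} + ⟨β, S_{t+1} - (1+r_{t+1})S_t⟩ ≥ 0 a.s.}`. -/
def Market.AtSet (M : Market Ω T d) (t : ℕ) : Set (Ω → Fin d → ℝ) :=
  {β | M.PurelyNonRev t β ∧
    ∀ᵐ ω ∂M.P, 0 ≤ 1 + M.r (t + 1) ω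
      + dotp (β ω) (fun j => M.S (t + 1) ω j - (1 + M.r (t + 1) ω) * M.S t ω j)}


/-!
Stopping at `τ` multiplies the total position at time `s` by the `F_s`-measurable indicator of
`{s < τ}`. The minimal-norm decomposition commutes with such indicators and is a.s. unique (the
Euclidean norm is strictly convex), so `q_s` of the stopped position is `1_{s < τ} q_s(β)`, which
gives (i).

For (ii), the wealth before liquidation `W_t = η_t + ⟨β_t, S_t⟩` equals `x + G_t + U_t - Π_t`,
where the book gains `U_t = ∑_{i ≤ t} ⟨N_{i,t}, S_t - S_i⟩` are nonnegative for a strategy that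
realizes losses. At a time `u` where `G` is maximal on `{0,…,T}` this gives `W_u ≥ x`, and no
taxes are paid after `u`. From then on `W` follows the frictionless recursion, in which the
reversible part of `β_t` earns the riskless rate and the nonreversible part loses at most
`(1 + r_{t+1}) ⟨q_t, S_t⟩`; induction gives `W_t ≥ -L_t`, and `W_T = η_T = V^α(x,N)`.
-/

section BankAccount

variable {d : ℕ} (α x : ℝ) (S : ℕ → Fin d → ℝ) (r : ℕ → ℝ) (N : ℕ → ℕ → Fin d → ℝ)

def bankAccount (t : ℕ) : ℝ := etaHist α x S r N t t

def holdings (t : ℕ) : Fin d → ℝ := ∑ i ∈ range (t + 1), N i t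

def realizedGains (t : ℕ) : ℝ := Gaux S r N (bankAccount α x S r N) t

def taxPaid (t : ℕ) : ℝ := Piaux α S r N (bankAccount α x S r N) t

def bookGains (t : ℕ) : ℝ := ∑ i ∈ range (t + 1), N i t ⬝ᵥ (S t - S i)

def wealth (t : ℕ) : ℝ := bankAccount α x S r N t + holdings N t ⬝ᵥ S t

lemma etaHist_of_le {t s : ℕ} (h : s ≤ t) :
    etaHist α x S r N t s = bankAccount α x S r N s := by
  induction t with
  | zero => obtain rfl := Nat.le_zero.mp h; rfl
  | succ t ih =>
    rcases h.lt_or_eq with h | rfl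
    · exact (if_pos (Nat.lt_succ_iff.mp h)).trans (ih (Nat.lt_succ_iff.mp h))
    · rfl

lemma Gaux_congr {e e' : ℕ → ℝ} {u : ℕ} (h : ∀ v < u, e v = e' v) :
    Gaux S r N e u = Gaux S r N e' u :=
  sum_congr rfl fun v hv => by rw [h (v - 1) (by grind)]

lemma Piaux_congr {e e' : ℕ → ℝ} {t : ℕ} (h : ∀ v < t, e v = e' v) :
    Piaux α S r N e t = Piaux α S r N e' t := by
  unfold Piaux
  congr 1
  exact sup'_congr _ rfl fun u hu => Gaux_congr S r N fun v hv => h v (by grind)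

lemma bankAccount_succ (t : ℕ) :
    bankAccount α x S r N (t + 1) = (1 + r (t + 1)) * bankAccount α x S r N t
      + (holdings N t - holdings N (t + 1)) ⬝ᵥ S (t + 1)
      - (taxPaid α x S r N (t + 1) - taxPaid α x S r N t) := by
  have htax : ∀ u ≤ t + 1, Piaux α S r N (etaHist α x S r N t) u = taxPaid α x S r N u :=
    fun u hu => Piaux_congr α S r N fun v hv => etaHist_of_le α x S r N (by omega)
  have htrade : dotp (fun j => (∑ i ∈ range (t + 1), (N i t j - N i (t + 1) j))
      - N (t + 1) (t + 1) j) (fun j => S (t + 1) j)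
      = (holdings N t - holdings N (t + 1)) ⬝ᵥ S (t + 1) := by
    congr 1
    ext j
    simp [holdings, sum_range_succ _ (t + 1), sum_sub_distrib]
    ring
  change (if t + 1 ≤ t then _ else etaHist α x S r N t t + r (t + 1) * etaHist α x S r N t t + _
    - (Piaux α S r N (etaHist α x S r N t) (t + 1) - Piaux α S r N (etaHist α x S r N t) t)) = _
  rw [if_neg (by omega), htax _ le_rfl, htax t (by omega), htrade]
  unfold bankAccount
  ring

lemma wealth_succ (t : ℕ) :
    wealth α x S r N (t + 1) = (1 + r (t + 1)) * wealth α x S r N t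
      + holdings N t ⬝ᵥ (S (t + 1) - (1 + r (t + 1)) • S t)
      - (taxPaid α x S r N (t + 1) - taxPaid α x S r N t) := by
  simp only [wealth, bankAccount_succ, sub_dotProduct, dotProduct_sub, dotProduct_smul,
    smul_eq_mul]
  ring

lemma realizedGains_zero : realizedGains α x S r N 0 = 0 := by
  simp [realizedGains, Gaux]

lemma realizedGains_succ (t : ℕ) :
    realizedGains α x S r N (t + 1) = realizedGains α x S r N t
      + bankAccount α x S r N t * r (t + 1)
      + ∑ i ∈ range (t + 1), (N i t - N i (t + 1)) ⬝ᵥ (S (t + 1) - S i) := by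
  rw [realizedGains, Gaux, sum_Icc_succ_top (by omega), add_assoc]
  rfl

lemma taxPaid_eq_of_forall_le {u t : ℕ} (hut : u ≤ t)
    (hmax : ∀ v ≤ t, realizedGains α x S r N v ≤ realizedGains α x S r N u) :
    taxPaid α x S r N t = α * realizedGains α x S r N u := by
  unfold taxPaid Piaux
  congr 1
  exact le_antisymm (sup'_le _ _ fun v hv => hmax v (by grind))
    (le_sup' (fun v => realizedGains α x S r N v) (by grind))

lemma taxPaid_zero : taxPaid α x S r N 0 = 0 := by
  rw [taxPaid_eq_of_forall_le α x S r N le_rfl fun v hv => by rw [Nat.le_zero.mp hv],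
    realizedGains_zero, mul_zero]

lemma wealth_zero : wealth α x S r N 0 = x := by
  simp [wealth, bankAccount, etaHist, holdings, dotp, dotProduct]

lemma wealth_eq (t : ℕ) :
    wealth α x S r N t
      = x + realizedGains α x S r N t + bookGains S N t - taxPaid α x S r N t := by
  induction t with
  | zero => simp [wealth_zero, realizedGains_zero, taxPaid_zero, bookGains]
  | succ t ih =>
    have hbook : bookGains S N (t + 1)
        = ∑ i ∈ range (t + 1), N i (t + 1) ⬝ᵥ (S (t + 1) - S i) := by
      simp [bookGains, sum_range_succ _ (t + 1)]
    have hgains : ∑ i ∈ range (t + 1), (N i t - N i (t + 1)) ⬝ᵥ (S (t + 1) - S i)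
        + bookGains S N (t + 1) - bookGains S N t = holdings N t ⬝ᵥ (S (t + 1) - S t) := by
      rw [hbook, bookGains, holdings, sum_dotProduct, ← sum_add_distrib, ← sum_sub_distrib]
      refine sum_congr rfl fun i _ => ?_
      simp only [sub_dotProduct, dotProduct_sub]
      ring
    rw [wealth_succ, realizedGains_succ]
    simp only [wealth, dotProduct_sub, dotProduct_smul, smul_eq_mul] at ih hgains ⊢
    linear_combination ih - hgains

end BankAccount

section LowerBound

variable {d : ℕ} (α x : ℝ) {S : ℕ → Fin d → ℝ} {r : ℕ → ℝ} {N : ℕ → ℕ → Fin d → ℝ}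

lemma bookGains_nonneg (hN : ∀ i t, 0 ≤ N i t) {t : ℕ}
    (hloss : ∀ i < t, ∀ j, S t j < S i j → N i t j = 0) : 0 ≤ bookGains S N t := by
  refine sum_nonneg fun i hi => sum_nonneg fun j _ => ?_
  by_cases hS : S t j < S i j
  · have hit : i < t := by
      rcases (Nat.lt_succ_iff.mp (mem_range.mp hi)).lt_or_eq with h | rfl
      · exact h
      · exact absurd hS (lt_irrefl _)
    simp [hloss i hit j hS]
  · exact mul_nonneg (hN i t j) (sub_nonneg.mpr (not_lt.mp hS))

/-- Up to a running maximum `u` of the realized gains the tax paid is `α G_u ≤ G_u`. -/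
lemma le_wealth_of_forall_le (hα : α ≤ 1) {u : ℕ}
    (hmax : ∀ v ≤ u, realizedGains α x S r N v ≤ realizedGains α x S r N u)
    (hbook : 0 ≤ bookGains S N u) : x ≤ wealth α x S r N u := by
  have hgains : 0 ≤ realizedGains α x S r N u := by
    simpa [realizedGains_zero] using hmax 0 (Nat.zero_le u)
  rw [wealth_eq, taxPaid_eq_of_forall_le α x S r N le_rfl hmax]
  nlinarith [mul_nonneg (sub_nonneg.mpr hα) hgains]

/-- Over one period the reversible part of the position earns exactly the riskless rate, so only
the nonreversible part `q` can lose, and at most its current value. -/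
lemma wealth_succ_ge {t : ℕ} {q : Fin d → ℝ} (hq : 0 ≤ q) (hS : 0 ≤ S (t + 1))
    (hrev : (holdings N t - q) ⬝ᵥ (S (t + 1) - (1 + r (t + 1)) • S t) = 0) :
    (1 + r (t + 1)) * (wealth α x S r N t - q ⬝ᵥ S t)
      - (taxPaid α x S r N (t + 1) - taxPaid α x S r N t) ≤ wealth α x S r N (t + 1) := by
  have hqS : 0 ≤ q ⬝ᵥ S (t + 1) := dotProduct_nonneg_of_nonneg hq hS
  rw [sub_dotProduct, sub_eq_zero] at hrev
  rw [wealth_succ, hrev, dotProduct_sub, dotProduct_smul, smul_eq_mul]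
  linarith

lemma neg_lossBound_le_wealth {T : ℕ} {rbar : ℝ} (q : ℕ → Fin d → ℝ) (hrbar : 0 ≤ rbar)
    (hS : ∀ t, 0 ≤ S t) (hr : ∀ t, 0 ≤ r t) (hr_le : ∀ t, 1 ≤ t → t ≤ T → r t ≤ rbar)
    (hq : ∀ s < T, 0 ≤ q s)
    (hrev : ∀ s < T, (holdings N s - q s) ⬝ᵥ (S (s + 1) - (1 + r (s + 1)) • S s) = 0)
    {u : ℕ} (hx : x ≤ wealth α x S r N u)
    (htax : ∀ t, u ≤ t → t < T → taxPaid α x S r N (t + 1) = taxPaid α x S r N t)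
    {t : ℕ} (hut : u ≤ t) (htT : t ≤ T) :
    -((max (-x) 0 + ∑ s ∈ range t, q s ⬝ᵥ S s) * (1 + rbar) ^ t) ≤ wealth α x S r N t := by
  set A : ℕ → ℝ := fun t => max (-x) 0 + ∑ s ∈ range t, q s ⬝ᵥ S s
  have hsum : ∀ t ≤ T, 0 ≤ ∑ s ∈ range t, q s ⬝ᵥ S s := fun t ht =>
    sum_nonneg fun s hs => dotProduct_nonneg_of_nonneg (hq s (by grind)) (hS s)
  have hA : ∀ t ≤ T, 0 ≤ A t := fun t ht => add_nonneg (le_max_right _ _) (hsum t ht)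
  induction t, hut using Nat.le_induction with
  | base =>
    have hpow : 1 ≤ (1 + rbar) ^ u := one_le_pow₀ (by linarith)
    calc -(A u * (1 + rbar) ^ u) ≤ -A u := neg_le_neg (le_mul_of_one_le_right (hA u htT) hpow)
      _ ≤ x := by simp only [A]; linarith [le_max_left (-x) 0, hsum u htT]
      _ ≤ wealth α x S r N u := hx
  | succ n hun ih =>
    set c := q n ⬝ᵥ S n
    have hc : 0 ≤ c := dotProduct_nonneg_of_nonneg (hq n htT) (hS n)
    have hP : 1 ≤ (1 + rbar) ^ n := one_le_pow₀ (by linarith)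
    have hrn : r (n + 1) ≤ rbar := hr_le (n + 1) (by omega) htT
    have hstep := wealth_succ_ge α x (hq n htT) (hS (n + 1)) (hrev n htT)
    rw [htax n hun htT, sub_self, sub_zero] at hstep
    have hAn : A (n + 1) = A n + c := by simp only [A, sum_range_succ, c]; ring
    calc -(A (n + 1) * (1 + rbar) ^ (n + 1))
        ≤ -((1 + rbar) * (A n * (1 + rbar) ^ n + c)) := by
          rw [hAn, pow_succ]
          nlinarith [le_mul_of_one_le_right hc hP]
      _ ≤ -((1 + r (n + 1)) * (A n * (1 + rbar) ^ n + c)) := by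
          gcongr
          nlinarith [hA n (by omega), hr (n + 1)]
      _ ≤ (1 + r (n + 1)) * (wealth α x S r N n - c) := by
          nlinarith [ih (by omega), hr (n + 1)]
      _ ≤ wealth α x S r N (n + 1) := hstep

theorem neg_lossBound_le_etaHist {T : ℕ} {rbar : ℝ} (q : ℕ → Fin d → ℝ) (hα : α ≤ 1)
    (hrbar : 0 ≤ rbar) (hS : ∀ t, 0 ≤ S t) (hr : ∀ t, 0 ≤ r t)
    (hr_le : ∀ t, 1 ≤ t → t ≤ T → r t ≤ rbar) (hN : ∀ i t, 0 ≤ N i t) (hNT : ∀ i, N i T = 0)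
    (hloss : ∀ i t j, i < t → t ≤ T → S t j < S i j → N i t j = 0)
    (hq : ∀ s < T, 0 ≤ q s)
    (hrev : ∀ s < T, (holdings N s - q s) ⬝ᵥ (S (s + 1) - (1 + r (s + 1)) • S s) = 0) :
    -((max (-x) 0 + ∑ s ∈ range T, q s ⬝ᵥ S s) * (1 + rbar) ^ T)
      ≤ etaHist α x S r N T T := by
  obtain ⟨u, huT, hmax⟩ := Set.exists_max_image (Set.Iic T) (realizedGains α x S r N)
    (Set.finite_Iic T) Set.nonempty_Iic
  have htax : ∀ t, u ≤ t → t ≤ T → taxPaid α x S r N t = α * realizedGains α x S r N u :=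
    fun t hut htT => taxPaid_eq_of_forall_le α x S r N hut fun v hv => hmax v (hv.trans htT)
  have hx : x ≤ wealth α x S r N u :=
    le_wealth_of_forall_le α x hα (fun v hv => hmax v (hv.trans huT))
      (bookGains_nonneg hN fun i hi j => hloss i u j hi huT)
  have hliquidated : wealth α x S r N T = etaHist α x S r N T T := by
    simp [wealth, bankAccount, holdings, hNT]
  rw [← hliquidated]
  exact neg_lossBound_le_wealth α x q hrbar hS hr hr_le hq hrev hx
    (fun t hut htT => by rw [htax (t + 1) (by omega) htT, htax t hut htT.le]) huT le_rfl

end LowerBound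

lemma IsStoppingTimeFun.measurableSet_lt {Ω : Type*} {F : ℕ → MeasurableSpace Ω} {τ : Ω → ℕ}
    (hτ : IsStoppingTimeFun F τ) (s : ℕ) : MeasurableSet[F s] {ω | s < τ ω} := by
  simpa only [Set.compl_ofPred, not_le] using (hτ s).compl

lemma eq_of_eucNorm_le_of_le_eucNorm_midpoint {d : ℕ} {a b : Fin d → ℝ}
    (hba : eucNorm b ≤ eucNorm a) (hmid : eucNorm a ≤ eucNorm ((2⁻¹ : ℝ) • (a + b))) :
    a = b := by
  have hsq : ∀ {v w : Fin d → ℝ}, eucNorm v ≤ eucNorm w → ∑ j, v j ^ 2 ≤ ∑ j, w j ^ 2 :=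
    fun h => (Real.sqrt_le_sqrt_iff (sum_nonneg fun j _ => sq_nonneg _)).mp h
  have hba' := hsq hba
  have hmid' := hsq hmid
  simp only [Pi.smul_apply, Pi.add_apply, smul_eq_mul] at hmid'
  -- parallelogram law
  have hpar : ∑ j, ((a j - b j) / 2) ^ 2
      = (∑ j, a j ^ 2 + ∑ j, b j ^ 2) / 2 - ∑ j, (2⁻¹ * (a j + b j)) ^ 2 := by
    rw [← sum_add_distrib, sum_div, ← sum_sub_distrib]
    exact sum_congr rfl fun j _ => by ring
  have hzero := (sum_eq_zero_iff_of_nonneg fun j _ => sq_nonneg ((a j - b j) / 2)).mp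
    (le_antisymm (by rw [hpar]; linarith) (sum_nonneg fun j _ => sq_nonneg _))
  funext j
  linarith [pow_eq_zero_iff (n := 2) two_ne_zero |>.mp (hzero j (mem_univ j))]

namespace Market

variable {Ω : Type*} [m0 : MeasurableSpace Ω] {T d : ℕ} {M : Market Ω T d} {t : ℕ}

lemma zero_mem_revCone : (0 : Ω → Fin d → ℝ) ∈ M.RevCone t :=
  ⟨measurable_const, fun _ _ => le_rfl, ae_of_all _ fun _ => zero_dotProduct _⟩

lemma convex_revCone : Convex ℝ (M.RevCone t) := by
  intro a ha b hb μ ν hμ hν _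
  refine ⟨(ha.1.const_smul μ).add (hb.1.const_smul ν), fun ω j => ?_, ?_⟩
  · exact add_nonneg (mul_nonneg hμ (ha.2.1 ω j)) (mul_nonneg hν (hb.2.1 ω j))
  · filter_upwards [ha.2.2, hb.2.2] with ω hωa hωb
    change (μ • a ω + ν • b ω) ⬝ᵥ _ = 0
    change a ω ⬝ᵥ _ = 0 at hωa
    change b ω ⬝ᵥ _ = 0 at hωb
    rw [add_dotProduct, smul_dotProduct, smul_dotProduct, hωa, hωb, smul_zero, smul_zero, add_zero]

lemma piecewise_mem_revCone {A : Set Ω} (hA : MeasurableSet[M.F t] A)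
    {a b : Ω → Fin d → ℝ} (ha : a ∈ M.RevCone t) (hb : b ∈ M.RevCone t) :
    A.piecewise a b ∈ M.RevCone t := by
  refine ⟨ha.1.piecewise hA hb.1, fun ω j => ?_, ?_⟩
  · by_cases hω : ω ∈ A
    · simpa [hω] using ha.2.1 ω j
    · simpa [hω] using hb.2.1 ω j
  · filter_upwards [ha.2.2, hb.2.2] with ω hωa hωb
    by_cases hω : ω ∈ A
    · simpa [hω] using hωa
    · simpa [hω] using hωb

/-- The nonreversible part is a.s. unique: the midpoint of two candidates is again a candidate,
and the Euclidean norm is strictly convex. -/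
lemma IsQ.ae_eq {β q q' : Ω → Fin d → ℝ} (h : M.IsQ t β q) (h' : M.IsQ t β q') :
    q =ᵐ[M.P] q' := by
  obtain ⟨hq, hq0, hβq, hmin⟩ := h
  obtain ⟨hq', hq'0, hβq', hmin'⟩ := h'
  have hβmid : (fun ω j => β ω j - ((2⁻¹ : ℝ) • (q + q')) ω j) ∈ M.RevCone t := by
    convert convex_revCone hβq hβq' (by norm_num : (0 : ℝ) ≤ 2⁻¹) (by norm_num : (0 : ℝ) ≤ 2⁻¹)
      (by norm_num) using 1
    ext ω j
    simp only [Pi.smul_apply, Pi.add_apply, smul_eq_mul]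
    ring
  have hmid0 : ∀ ω j, 0 ≤ ((2⁻¹ : ℝ) • (q + q')) ω j := fun ω j =>
    mul_nonneg (by norm_num) (add_nonneg (hq0 ω j) (hq'0 ω j))
  filter_upwards [hmin' q hq hq0 hβq, hmin _ ((hq.add hq').const_smul _) hmid0 hβmid]
    with ω hle hlemid
  exact eq_of_eucNorm_le_of_le_eucNorm_midpoint hle hlemid

lemma IsQ.indicator {β q : Ω → Fin d → ℝ} (h : M.IsQ t β q) {A : Set Ω}
    (hA : MeasurableSet[M.F t] A) : M.IsQ t (A.indicator β) (A.indicator q) := by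
  obtain ⟨hq, hq0, hβq, hmin⟩ := h
  refine ⟨hq.indicator hA, fun ω j => ?_, ?_, fun q' hq' hq'0 hβq' => ?_⟩
  · by_cases hω : ω ∈ A <;> simp [hω, hq0 ω j]
  · convert piecewise_mem_revCone hA hβq zero_mem_revCone using 1
    ext ω j
    by_cases hω : ω ∈ A <;> simp [hω]
  · -- compare `q'` on `A` with the candidate that equals `q'` on `A` and `q` off `A`
    have hglued : (fun ω j => β ω j - A.piecewise q' q ω j) ∈ M.RevCone t := by
      convert piecewise_mem_revCone hA hβq' hβq using 1
      ext ω j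
      by_cases hω : ω ∈ A <;> simp [hω]
    have hglued0 : ∀ ω j, 0 ≤ A.piecewise q' q ω j := fun ω j => by
      by_cases hω : ω ∈ A <;> simp [hω, hq'0 ω j, hq0 ω j]
    filter_upwards [hmin _ (hq'.piecewise hA hq) hglued0 hglued] with ω hω'
    by_cases hω : ω ∈ A
    · simpa [hω] using hω'
    · simp [hω, eucNorm]

lemma IsQ.ae_eq_ite_of_stoppingTime {β q qτ : Ω → Fin d → ℝ} {τ : Ω → ℕ}
    (hτ : IsStoppingTimeFun M.F τ) (h : M.IsQ t β q)
    (hstopped : M.IsQ t (fun ω => if t < τ ω then β ω else 0) qτ) :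
    qτ =ᵐ[M.P] fun ω => if t < τ ω then q ω else 0 := by
  have hind : ∀ f : Ω → Fin d → ℝ,
      {ω | t < τ ω}.indicator f = fun ω => if t < τ ω then f ω else 0 := fun f => by
    ext ω : 1
    simp [Set.indicator_apply]
  have hqind := h.indicator (hτ.measurableSet_lt t)
  rw [hind, hind] at hqind
  exact hstopped.ae_eq hqind

lemma IsQ.ae_sub_dotProduct_eq_zero {β q : Ω → Fin d → ℝ} (h : M.IsQ t β q) :
    ∀ᵐ ω ∂M.P, (β ω - q ω) ⬝ᵥ (M.S (t + 1) ω - (1 + M.r (t + 1) ω) • M.S t ω) = 0 :=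
  h.2.2.1.2.2

end Market

lemma Finset.sum_range_ite_lt {M : Type*} [AddCommMonoid M] (f : ℕ → M) (t k : ℕ) :
    ∑ s ∈ range t, (if s < k then f s else 0) = ∑ s ∈ range (min t k), f s := by
  rw [← sum_filter]
  congr 1
  ext s
  simp

theorem lossBound_stopped_and_lower_bound_general
    (M : Market Ω T d) (α : ℝ) (hα1 : α < 1)
    (hS : ∀ t ω j, 0 ≤ M.S t ω j) (rbar : ℝ) (hrbar : 0 ≤ rbar)
    (hr : ∀ᵐ ω ∂M.P, ∀ t, 1 ≤ t → t ≤ T → M.r t ω ≤ rbar)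
    (x : ℝ) (N : ℕ → ℕ → Ω → Fin d → ℝ) (hN : M.IsStrategy N)
    (qN : ℕ → Ω → Fin d → ℝ)
    (hqN : ∀ s, s < T → M.IsQ s (fun ω => ∑ i ∈ Finset.range (s + 1), N i s ω) (qN s)) :
    (∀ τ : Ω → ℕ, IsStoppingTimeFun M.F τ → (∀ ω, τ ω ≤ T) →
      ∀ qτ : ℕ → Ω → Fin d → ℝ,
        (∀ s, s < T → M.IsQ s
          (fun ω => ∑ i ∈ Finset.range (s + 1),
            (if s < τ ω then N i s ω else (0 : Fin d → ℝ))) (qτ s)) →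
        ∀ t, t ≤ T → ∀ᵐ ω ∂M.P,
          Lfun x rbar T M.S qτ t ω = Lfun x rbar T M.S qN (min t (τ ω)) ω) ∧
    (M.RealizesLosses N →
      ∀ᵐ ω ∂M.P, -(Lfun x rbar T M.S qN T ω) ≤ M.V α x N ω) := by
  refine ⟨fun τ hτ _ qτ hqτ t ht => ?_, fun hloss => ?_⟩
  · have hqτ_eq : ∀ᵐ ω ∂M.P, ∀ s < T, qτ s ω = if s < τ ω then qN s ω else 0 := by
      refine ae_all_iff.2 fun s => eventually_imp_distrib_left.2 fun hs => ?_
      have hstopped := hqτ s hs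
      simp only [sum_ite_irrel, sum_const_zero] at hstopped
      exact (hqN s hs).ae_eq_ite_of_stoppingTime hτ hstopped
    filter_upwards [hqτ_eq] with ω hω
    simp only [Lfun, ← Finset.sum_range_ite_lt]
    congr 2
    refine sum_congr rfl fun s hs => ?_
    rw [hω s (by grind)]
    split_ifs <;> simp [dotp]
  · obtain ⟨-, hN0, -, hNT, -⟩ := hN
    have hrev := ae_all_iff.2 fun s =>
      eventually_imp_distrib_left.2 fun hs => (hqN s hs).ae_sub_dotProduct_eq_zero
    have hloss' : ∀ᵐ ω ∂M.P, ∀ i t j, i < t → t ≤ T → M.S t ω j < M.S i ω j → N i t ω j = 0 := by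
      simp only [ae_all_iff, eventually_imp_distrib_left]
      exact hloss
    filter_upwards [hr, hrev, hloss'] with ω hrω hrevω hlossω
    exact neg_lossBound_le_etaHist α x (fun s => qN s ω) hα1.le hrbar (fun t => hS t ω)
      (fun t => M.r_nonneg t ω) hrω (fun i t => hN0 i t ω) (fun i => funext (hNT i ω))
      hlossω (fun s hs => (hqN s hs).2.1 ω) hrevω

/-- Properties of the loss bound `L_t(N)`: (i) it is consistent with
stopping, `L_t(N^{(τ)}) = L_{t ∧ τ}(N)`; (ii) for a strategy that realizes losses,
`V^α(x,N) ≥ -L_T(N)` a.s. -/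
theorem lossBound_stopped_and_lower_bound
    (M : Market Ω T d) (α : ℝ) (hα0 : 0 ≤ α) (hα1 : α < 1)
    (hS : ∀ t ω j, 0 ≤ M.S t ω j) (rbar : ℝ) (hrbar : 0 ≤ rbar)
    (hr : ∀ᵐ ω ∂M.P, ∀ t, 1 ≤ t → t ≤ T → M.r t ω ≤ rbar)
    (x : ℝ) (N : ℕ → ℕ → Ω → Fin d → ℝ) (hN : M.IsStrategy N)
    (qN : ℕ → Ω → Fin d → ℝ)
    (hqN : ∀ s, s < T → M.IsQ s (fun ω => ∑ i ∈ Finset.range (s + 1), N i s ω) (qN s)) :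
    (∀ τ : Ω → ℕ, IsStoppingTimeFun M.F τ → (∀ ω, τ ω ≤ T) →
      ∀ qτ : ℕ → Ω → Fin d → ℝ,
        (∀ s, s < T → M.IsQ s
          (fun ω => ∑ i ∈ Finset.range (s + 1),
            (if s < τ ω then N i s ω else (0 : Fin d → ℝ))) (qτ s)) →
        ∀ t, t ≤ T → ∀ᵐ ω ∂M.P,
          Lfun x rbar T M.S qτ t ω = Lfun x rbar T M.S qN (min t (τ ω)) ω) ∧
    (M.RealizesLosses N →
      ∀ᵐ ω ∂M.P, -(Lfun x rbar T M.S qN T ω) ≤ M.V α x N ω) :=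
  lossBound_stopped_and_lower_bound_general M α hα1 hS rbar hrbar hr x N hN qN hqN

end
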